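/- Let n, m ≥ 1, let θ_1 < ... < θ_m be distinct real numbers, and let f_{ij} (1 ≤ i ≤ n, 1 ≤ j ≤ m) be nonnegative real numbers such that there exists an index j_0 with f_{i j_0} > 0 for all i = 1,...,n. For a PMF π on {1,...,m} define the loss ℓ(π) = −(1/n) Σ_{i=1}^n log( Σ_{j=1}^m f_{ij} π_j ). Let F be a set of PMFs on {1,...,m} and suppose π̂ ∈ F is a global minimizer of ℓ over F (ℓ(π̂) ≤ ℓ(π) for all π ∈ F) satisfying Σ_{j=1}^m f_{ij} π̂_j > 0 for every i. Then for every ε > 0 there exists a one-hidden-layer ReLU network v : ℝ → ℝ such that the PMF g defined by g_j = exp(v(θ_j)) / Σ_{k=1}^m exp(v(θ_k)) satisfies |ℓ(g) − ℓ(π̂)| < ε. -/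

import Mathlib

/-!
The loss is continuous at `πhat` because every likelihood `∑ j, f i j * πhat j` is positive, and
the strictly positive PMFs `(1 - δ) • πhat + δ • uniform` converge to `πhat` as `δ → 0⁺`. A strictly
positive PMF `q` is exactly the softmax of `log q` at the grid `θ`, and one-hidden-layer ReLU
networks interpolate arbitrary values at finitely many points: processing the points in increasing
order, a unit `max 0 (t - M)` with its kink at the largest point `M` handled so far corrects the
value at the new point without changing the earlier ones.
-/

open Finset

/-- `v : ℝ → ℝ` is a one-hidden-layer ReLU network: there exist `H ∈ ℕ` and
parameters `c, w, b ∈ ℝ^H`, `d ∈ ℝ` with `v θ = d + ∑ k, c k * max 0 (w k * θ + b k)`. -/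
def IsOneHiddenLayerReLUNet (v : ℝ → ℝ) : Prop :=
  ∃ (H : ℕ) (c w b : Fin H → ℝ) (d : ℝ),
    ∀ t : ℝ, v t = d + ∑ k, c k * max 0 (w k * t + b k)

/-- The mixture log-likelihood loss `ℓ(π) = −(1/n) Σ_i log( Σ_j f i j * π j )`. -/
noncomputable def mixLoss {n m : ℕ} (f : Fin n → Fin m → ℝ) (π : Fin m → ℝ) : ℝ :=
  -(1 / (n : ℝ)) * ∑ i, Real.log (∑ j, f i j * π j)

open Filter Topology

namespace IsOneHiddenLayerReLUNet

theorem const (d : ℝ) : IsOneHiddenLayerReLUNet fun _ => d :=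
  ⟨0, 0, 0, 0, d, fun t => by simp⟩

theorem add_mul_relu_sub {v : ℝ → ℝ} (hv : IsOneHiddenLayerReLUNet v) (c M : ℝ) :
    IsOneHiddenLayerReLUNet fun t => v t + c * max 0 (t - M) := by
  obtain ⟨H, cs, ws, bs, d, hvd⟩ := hv
  refine ⟨H + 1, Fin.snoc cs c, Fin.snoc ws 1, Fin.snoc bs (-M), d, fun t => ?_⟩
  show v t + _ = _
  rw [hvd t, Fin.sum_univ_castSucc]
  simp only [Fin.snoc_castSucc, Fin.snoc_last, one_mul, ← sub_eq_add_neg]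
  ring

theorem exists_eqOn (s : Finset ℝ) (y : ℝ → ℝ) :
    ∃ v, IsOneHiddenLayerReLUNet v ∧ Set.EqOn v y s := by
  induction s using Finset.induction_on_max with
  | empty => exact ⟨fun _ => 0, const 0, by simp⟩
  | insert a s ha ih =>
    rcases s.eq_empty_or_nonempty with rfl | hs
    · exact ⟨fun _ => y a, const (y a), by simp⟩
    obtain ⟨v, hv, hvy⟩ := ih
    set M := s.max' hs
    have hMa : 0 < a - M := sub_pos.mpr (ha M (s.max'_mem hs))
    refine ⟨fun t => v t + (y a - v a) / (a - M) * max 0 (t - M), hv.add_mul_relu_sub _ _, ?_⟩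
    intro x hx
    dsimp only
    rcases mem_insert.mp hx with rfl | hxs
    · simp only [max_eq_right hMa.le, div_mul_cancel₀ _ hMa.ne']
      ring
    · have hxM : x - M ≤ 0 := sub_nonpos.mpr (s.le_max' x hxs)
      simp only [max_eq_left hxM, mul_zero, add_zero]
      exact hvy hxs

theorem exists_comp_eq {ι : Type*} [Fintype ι] {θ : ι → ℝ} (hθ : θ.Injective) (y : ι → ℝ) :
    ∃ v, IsOneHiddenLayerReLUNet v ∧ ∀ j, v (θ j) = y j := by
  obtain ⟨v, hv, hvy⟩ := exists_eqOn (univ.image θ) (Function.extend θ y 0)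
  exact ⟨v, hv, fun j => (hvy (mem_image_of_mem θ (mem_univ j))).trans (hθ.extend_apply y 0 j)⟩

theorem exists_softmax_eq {ι : Type*} [Fintype ι] {θ : ι → ℝ} (hθ : θ.Injective) {q : ι → ℝ}
    (hq0 : ∀ j, 0 < q j) (hq1 : ∑ j, q j = 1) :
    ∃ v, IsOneHiddenLayerReLUNet v ∧
      (fun j => Real.exp (v (θ j)) / ∑ k, Real.exp (v (θ k))) = q := by
  obtain ⟨v, hv, hvq⟩ := exists_comp_eq hθ fun j => Real.log (q j)
  have hexp : ∀ j, Real.exp (v (θ j)) = q j := fun j => by rw [hvq, Real.exp_log (hq0 j)]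
  exact ⟨v, hv, funext fun j => by simp only [hexp, hq1, div_one]⟩

end IsOneHiddenLayerReLUNet

theorem continuousAt_mixLoss {n m : ℕ} (f : Fin n → Fin m → ℝ) {π : Fin m → ℝ}
    (hπ : ∀ i, ∑ j, f i j * π j ≠ 0) : ContinuousAt (mixLoss f) π := by
  have hL : ∀ i, Continuous fun π : Fin m → ℝ => ∑ j, f i j * π j := fun i => by fun_prop
  exact continuousAt_const.mul (tendsto_finsetSum _ fun i _ => (hL i).continuousAt.log (hπ i))

theorem exists_pos_sum_eq_one_mem_nhds {ι : Type*} [Fintype ι] [Nonempty ι] {p : ι → ℝ}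
    (hp0 : ∀ j, 0 ≤ p j) (hp1 : ∑ j, p j = 1) {s : Set (ι → ℝ)} (hs : s ∈ 𝓝 p) :
    ∃ q ∈ s, (∀ j, 0 < q j) ∧ ∑ j, q j = 1 := by
  let u : ι → ℝ := fun _ => 1 / Fintype.card ι
  have hu0 : ∀ j, 0 < u j := fun _ => by positivity
  have hu1 : ∑ j, u j = 1 := by simp [u]
  let γ : ℝ → ι → ℝ := fun δ => (1 - δ) • p + δ • u
  have hγ : Tendsto γ (𝓝[>] 0) (𝓝 p) := by
    have : Continuous γ := by fun_prop
    simpa [γ] using this.continuousAt.continuousWithinAt.tendsto (s := Set.Ioi 0) (x := 0)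
  obtain ⟨δ, hδs, hδ0, hδ1⟩ :=
    ((hγ.eventually_mem hs).and (Ioo_mem_nhdsGT (zero_lt_one' ℝ))).exists
  refine ⟨γ δ, hδs, fun j => ?_, ?_⟩
  · have hpj := hp0 j
    have huj := hu0 j
    simp only [γ, Pi.add_apply, Pi.smul_apply, smul_eq_mul]
    nlinarith
  · simp only [γ, Pi.add_apply, Pi.smul_apply, smul_eq_mul, sum_add_distrib, ← mul_sum, hp1, hu1]
    ring

theorem neural_g_approximates_global_min_loss_general
    (n m : ℕ) (hm : 1 ≤ m)
    (θ : Fin m → ℝ) (hθ : StrictMono θ)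
    (f : Fin n → Fin m → ℝ)
    (F : Set (Fin m → ℝ))
    (hF : ∀ π ∈ F, (∀ j, 0 ≤ π j) ∧ ∑ j, π j = 1)
    (πhat : Fin m → ℝ) (hπhatF : πhat ∈ F)
    (hπhatpos : ∀ i : Fin n, 0 < ∑ j, f i j * πhat j)
    (ε : ℝ) (hε : 0 < ε) :
    ∃ v : ℝ → ℝ, IsOneHiddenLayerReLUNet v ∧
      |mixLoss f
          (fun j => Real.exp (v (θ j)) / (∑ k : Fin m, Real.exp (v (θ k)))) -
        mixLoss f πhat| < ε := by
  have : Nonempty (Fin m) := ⟨⟨0, hm⟩⟩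
  obtain ⟨hπhat0, hπhat1⟩ := hF πhat hπhatF
  have hnhds : mixLoss f ⁻¹' Metric.ball (mixLoss f πhat) ε ∈ 𝓝 πhat :=
    continuousAt_mixLoss f (fun i => (hπhatpos i).ne') (Metric.ball_mem_nhds _ hε)
  obtain ⟨q, hqε, hq0, hq1⟩ := exists_pos_sum_eq_one_mem_nhds hπhat0 hπhat1 hnhds
  obtain ⟨v, hv, hvq⟩ := IsOneHiddenLayerReLUNet.exists_softmax_eq hθ.injective hq0 hq1
  exact ⟨v, hv, by rw [hvq, ← Real.dist_eq]; exact hqε⟩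

/-- Theorem 2 of the paper: a softmax-of-ReLU-network PMF (neural-g) can approximate
the loss value achieved by a global minimizer of the mixture log-likelihood loss over
an arbitrary family `F` of PMFs. -/
theorem neural_g_approximates_global_min_loss
    (n m : ℕ) (hn : 1 ≤ n) (hm : 1 ≤ m)
    (θ : Fin m → ℝ) (hθ : StrictMono θ)
    (f : Fin n → Fin m → ℝ) (hf0 : ∀ i j, 0 ≤ f i j)
    (hfpos : ∃ j0 : Fin m, ∀ i : Fin n, 0 < f i j0)
    (F : Set (Fin m → ℝ))
    (hF : ∀ π ∈ F, (∀ j, 0 ≤ π j) ∧ ∑ j, π j = 1)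
    (πhat : Fin m → ℝ) (hπhatF : πhat ∈ F)
    (hmin : ∀ π ∈ F, mixLoss f πhat ≤ mixLoss f π)
    (hπhatpos : ∀ i : Fin n, 0 < ∑ j, f i j * πhat j)
    (ε : ℝ) (hε : 0 < ε) :
    ∃ v : ℝ → ℝ, IsOneHiddenLayerReLUNet v ∧
      |mixLoss f
          (fun j => Real.exp (v (θ j)) / (∑ k : Fin m, Real.exp (v (θ k)))) -
        mixLoss f πhat| < ε :=
  neural_g_approximates_global_min_loss_general n m hm θ hθ f F hF πhat hπhatF hπhatpos ε hε
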